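/- arXiv:math/0509248 — 16 statements merged into one kernel-verified Lean document; each statement's English description precedes it below -/
import Mathlib

section
/- Let W be a set, M a Boolean subalgebra of the powerset of W, and f : M × M → M a function satisfying (β3) A ∩ f(B,A) ⊆ B and (β4) f(W \ B, A) = W \ f(B,A) for all A,B ∈ M. Then for all B ∈ M one has f(B, W) = B. -/
/-- Semantic form of the 'Full universe' theorem: (ψ|⊤) ≡ ψ. -/
theorem full_universe {W : Type*} (M : Set (Set W))
    (hM_univ : Set.univ ∈ M)
    (hM_inter : ∀ A ∈ M, ∀ B ∈ M, A ∩ B ∈ M)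
    (hM_compl : ∀ A ∈ M, Set.univ \ A ∈ M)
    (f : Set W → Set W → Set W)
    (hf : ∀ A ∈ M, ∀ B ∈ M, f B A ∈ M)
    (hβ3 : ∀ A ∈ M, ∀ B ∈ M, A ∩ f B A ⊆ B)
    (hβ4 : ∀ A ∈ M, ∀ B ∈ M, f (Set.univ \ B) A = Set.univ \ f B A) :
    ∀ B ∈ M, f B Set.univ = B := by
  intro B hB
  have h1 : f B Set.univ ⊆ B := fun x hx =>
    hβ3 Set.univ hM_univ B hB ⟨trivial, hx⟩
  have h2 : f (Set.univ \ B) Set.univ ⊆ Set.univ \ B := fun x hx =>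
    hβ3 Set.univ hM_univ _ (hM_compl B hB) ⟨trivial, hx⟩
  rw [hβ4 Set.univ hM_univ B hB] at h2
  exact h1.antisymm fun x hx => by
    by_contra h
    exact (h2 ⟨trivial, h⟩).2 hx
end

section
/- Let W be a set, M a Boolean subalgebra of the powerset of W, and f : M × M → M a function satisfying (β3) A ∩ f(B,A) ⊆ B, (β4) f(W \ B, A) = W \ f(B,A), and (β6w) f(B,A) = B implies f(B, W \ A) = B, for all A,B ∈ M. Then for all B ∈ M one has f(B, ∅) = B. -/
/-- Semantic form of the 'Empty universe' theorem: (ψ|⊥) ≡ ψ. -/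
theorem empty_universe {W : Type*} (M : Set (Set W))
    (hM_univ : Set.univ ∈ M)
    (hM_inter : ∀ A ∈ M, ∀ B ∈ M, A ∩ B ∈ M)
    (hM_compl : ∀ A ∈ M, Set.univ \ A ∈ M)
    (f : Set W → Set W → Set W)
    (hf : ∀ A ∈ M, ∀ B ∈ M, f B A ∈ M)
    (hβ3 : ∀ A ∈ M, ∀ B ∈ M, A ∩ f B A ⊆ B)
    (hβ4 : ∀ A ∈ M, ∀ B ∈ M, f (Set.univ \ B) A = Set.univ \ f B A)
    (hβ6w : ∀ A ∈ M, ∀ B ∈ M, f B A = B → f B (Set.univ \ A) = B) :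
    ∀ B ∈ M, f B (∅ : Set W) = B := by
  intro B hB
  have h1 : f B Set.univ ⊆ B := by
    have := hβ3 Set.univ hM_univ B hB
    simpa using this
  have h2 : B ⊆ f B Set.univ := by
    have h3 : f (Set.univ \ B) Set.univ ⊆ Set.univ \ B := by
      have := hβ3 Set.univ hM_univ (Set.univ \ B) (hM_compl B hB)
      simpa using this
    rw [hβ4 Set.univ hM_univ B hB] at h3
    intro x hx
    by_contra hxc
    exact (h3 ⟨Set.mem_univ x, hxc⟩).2 hx
  have heq : f B Set.univ = B := Set.Subset.antisymm h1 h2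
  have := hβ6w Set.univ hM_univ B hB heq
  simpa using this
end

section
/- Let W be a set, M a Boolean subalgebra of the powerset of W, and f : M × M → M a function satisfying (β1): if A ⊆ B and A ≠ ∅ then f(B,A) = W, for all A,B ∈ M. Then for every A ∈ M, if f(A,A) = A then A = ∅ or A = W. -/
/-- Semantic form of 'Narcissistic independence': a proposition independent
of itself (f(A,A) = A) is either full or empty. -/
theorem narcissistic_independence {W : Type*} (M : Set (Set W))
    (hM_univ : Set.univ ∈ M)
    (hM_inter : ∀ A ∈ M, ∀ B ∈ M, A ∩ B ∈ M)
    (hM_compl : ∀ A ∈ M, Set.univ \ A ∈ M)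
    (f : Set W → Set W → Set W)
    (hf : ∀ A ∈ M, ∀ B ∈ M, f B A ∈ M)
    (hβ1 : ∀ A ∈ M, ∀ B ∈ M, A ⊆ B → A ≠ ∅ → f B A = Set.univ) :
    ∀ A ∈ M, f A A = A → A = ∅ ∨ A = Set.univ := by
  intro A hA hAA
  by_cases h : A = ∅
  · exact Or.inl h
  · exact Or.inr (hAA ▸ hβ1 A hA A hA subset_rfl h)
end

section
/- Let W be a set, M a Boolean subalgebra of the powerset of W, and f : M × M → M a function satisfying (β1): if A ⊆ B and A ≠ ∅ then f(B,A) = W, (β2): f(B ∪ C, A) ⊆ f(B,A) ∪ f(C,A), (β3): A ∩ f(B,A) ⊆ B, and (β4): f(W \ B, A) = W \ f(B,A), for all A,B,C ∈ M. Then for all A, B, C ∈ M with A ≠ ∅ one has f(B ∩ C, A) = f(B,A) ∩ f(C,A) and f(B ∪ C, A) = f(B,A) ∪ f(C,A). -/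
/-- Semantic form of 'Sub-universes are classical':
(ψ∧η|φ) ≡ (ψ|φ)∧(η|φ) and (ψ∨η|φ) ≡ (ψ|φ)∨(η|φ) for nonempty φ. -/
theorem subuniverses_classical {W : Type*} (M : Set (Set W))
    (hM_univ : Set.univ ∈ M)
    (hM_inter : ∀ A ∈ M, ∀ B ∈ M, A ∩ B ∈ M)
    (hM_compl : ∀ A ∈ M, Set.univ \ A ∈ M)
    (f : Set W → Set W → Set W)
    (hf : ∀ A ∈ M, ∀ B ∈ M, f B A ∈ M)
    (hβ1 : ∀ A ∈ M, ∀ B ∈ M, A ⊆ B → A ≠ ∅ → f B A = Set.univ)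
    (hβ2 : ∀ A ∈ M, ∀ B ∈ M, ∀ C ∈ M, f (B ∪ C) A ⊆ f B A ∪ f C A)
    (hβ3 : ∀ A ∈ M, ∀ B ∈ M, A ∩ f B A ⊆ B)
    (hβ4 : ∀ A ∈ M, ∀ B ∈ M, f (Set.univ \ B) A = Set.univ \ f B A) :
    ∀ A ∈ M, ∀ B ∈ M, ∀ C ∈ M, A ≠ ∅ →
      f (B ∩ C) A = f B A ∩ f C A ∧ f (B ∪ C) A = f B A ∪ f C A := by
  intro A hA B hB C hC hA0
  -- f(univ) = univ
  have hfuniv : f Set.univ A = Set.univ :=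
    hβ1 A hA _ hM_univ (Set.subset_univ A) hA0
  -- f(∅) = ∅
  have hfempty : f ∅ A = ∅ := by
    have h := hβ4 A hA _ hM_univ
    rw [hfuniv] at h
    simpa using h
  -- superadditivity for intersections: f X ∩ f Y ⊆ f (X ∩ Y)
  have hsuper : ∀ X ∈ M, ∀ Y ∈ M, f X A ∩ f Y A ⊆ f (X ∩ Y) A := by
    intro X hX Y hY
    have h2 := hβ2 A hA _ (hM_compl X hX) _ (hM_compl Y hY)
    have e : (Set.univ \ X) ∪ (Set.univ \ Y) = Set.univ \ (X ∩ Y) := by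
      ext x; simp [and_or_left]; tauto
    rw [e, hβ4 A hA _ (hM_inter X hX Y hY), hβ4 A hA X hX, hβ4 A hA Y hY] at h2
    intro x hx
    by_contra hxn
    have := h2 ⟨Set.mem_univ x, hxn⟩
    rcases this with h | h
    · exact h.2 hx.1
    · exact h.2 hx.2
  -- monotonicity: X ⊆ Y implies f X ⊆ f Y
  have hmono : ∀ X ∈ M, ∀ Y ∈ M, X ⊆ Y → f X A ⊆ f Y A := by
    intro X hX Y hY hXY
    have h := hsuper X hX _ (hM_compl Y hY)
    have e : X ∩ (Set.univ \ Y) = ∅ := by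
      ext x; simp only [Set.mem_inter_iff, Set.mem_diff, Set.mem_univ, true_and,
          Set.mem_empty_iff_false, iff_false, not_and, not_not]
      intro hx; exact hXY hx
    rw [e, hfempty, hβ4 A hA Y hY] at h
    intro x hx
    by_contra hxn
    exact (h ⟨hx, Set.mem_univ x, hxn⟩)
  constructor
  · apply Set.Subset.antisymm
    · exact Set.subset_inter
        (hmono _ (hM_inter B hB C hC) B hB Set.inter_subset_left)
        (hmono _ (hM_inter B hB C hC) C hC Set.inter_subset_right)
    · exact hsuper B hB C hC
  · apply Set.Subset.antisymm
    · exact hβ2 A hA B hB C hC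
    · have hBC : B ∪ C ∈ M := by
        have h1 := hM_inter _ (hM_compl B hB) _ (hM_compl C hC)
        have h2 := hM_compl _ h1
        have e : Set.univ \ ((Set.univ \ B) ∩ (Set.univ \ C)) = B ∪ C := by
          ext x; simp; tauto
        rwa [e] at h2
      exact Set.union_subset
        (hmono B hB _ hBC Set.subset_union_left)
        (hmono C hC _ hBC Set.subset_union_right)
end

section
/- Let W be a set, M a Boolean subalgebra of the powerset of W, and f : M × M → M a function satisfying, for all sets in M: (β1) if A ⊆ B and A ≠ ∅ then f(B,A) = W; (β2) f(B ∪ C, A) ⊆ f(B,A) ∪ f(C,A); (β3) A ∩ f(B,A) ⊆ B; (β4) f(W \ B, A) = W \ f(B,A); (β6w) f(B,A) = B implies f(B, W \ A) = B. Then for all A, B ∈ M one has f(f(B,A), A) = f(B,A). -/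
/-- Semantic form of 'Inter-independence': ⊢ (ψ|φ) × φ, i.e. a conditional
proposition is logically independent of its conditioning proposition. -/
theorem inter_independence {W : Type*} (M : Set (Set W))
    (hM_univ : Set.univ ∈ M)
    (hM_inter : ∀ A ∈ M, ∀ B ∈ M, A ∩ B ∈ M)
    (hM_compl : ∀ A ∈ M, Set.univ \ A ∈ M)
    (f : Set W → Set W → Set W)
    (hf : ∀ A ∈ M, ∀ B ∈ M, f B A ∈ M)
    (hβ1 : ∀ A ∈ M, ∀ B ∈ M, A ⊆ B → A ≠ ∅ → f B A = Set.univ)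
    (hβ2 : ∀ A ∈ M, ∀ B ∈ M, ∀ C ∈ M, f (B ∪ C) A ⊆ f B A ∪ f C A)
    (hβ3 : ∀ A ∈ M, ∀ B ∈ M, A ∩ f B A ⊆ B)
    (hβ4 : ∀ A ∈ M, ∀ B ∈ M, f (Set.univ \ B) A = Set.univ \ f B A)
    (hβ6w : ∀ A ∈ M, ∀ B ∈ M, f B A = B → f B (Set.univ \ A) = B) :
    ∀ A ∈ M, ∀ B ∈ M, f (f B A) A = f B A := by
  -- union closure
  have hM_union : ∀ A ∈ M, ∀ B ∈ M, A ∪ B ∈ M := by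
    intro A hA B hB
    have h : A ∪ B = Set.univ \ ((Set.univ \ A) ∩ (Set.univ \ B)) := by
      ext w; simp [Set.mem_union, Set.mem_diff]; tauto
    rw [h]
    exact hM_compl _ (hM_inter _ (hM_compl A hA) _ (hM_compl B hB))
  -- trace lemma : A ∩ f B A = A ∩ B
  have trace : ∀ A ∈ M, ∀ B ∈ M, A ∩ f B A = A ∩ B := by
    intro A hA B hB
    apply Set.Subset.antisymm
    · exact Set.subset_inter Set.inter_subset_left (hβ3 A hA B hB)
    · intro w hw
      refine ⟨hw.1, ?_⟩
      by_contra hnot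
      have h1 : w ∈ A ∩ f (Set.univ \ B) A := by
        rw [hβ4 A hA B hB]; exact ⟨hw.1, Set.mem_univ w, hnot⟩
      exact (hβ3 A hA _ (hM_compl B hB) h1).2 hw.2
  intro A hA B hB
  by_cases hAe : A = ∅
  · subst hAe
    have h0 : ∀ C ∈ M, f C ∅ = C := by
      intro C hC
      have huniv : f C Set.univ = C := by
        have := trace Set.univ hM_univ C hC
        simpa using this
      have := hβ6w Set.univ hM_univ C hC huniv
      simpa using this
    rw [h0 B hB, h0 B hB]
  · -- A ≠ ∅
    have hfcA : f (Set.univ \ A) A = ∅ := by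
      have h1 : f A A = Set.univ := hβ1 A hA A hA (le_refl _) hAe
      have h2 := hβ4 A hA A hA
      rw [h1] at h2; simpa using h2
    have mono : ∀ B' ∈ M, ∀ C ∈ M, B' ⊆ C → f B' A ⊆ f C A := by
      intro B' hB' C hC hsub
      have hcB' := hM_compl B' hB'
      have hU : C ∪ (Set.univ \ B') = Set.univ := by
        ext w; simp [Set.mem_union, Set.mem_diff]
        by_cases hw : w ∈ B'
        · exact Or.inl (hsub hw)
        · exact Or.inr hw
      have h1 : f (C ∪ (Set.univ \ B')) A = Set.univ := by
        rw [hU]; exact hβ1 A hA Set.univ hM_univ (Set.subset_univ A) hAe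
      have h2 := hβ2 A hA C hC (Set.univ \ B') hcB'
      rw [h1, hβ4 A hA B' hB'] at h2
      intro w hw
      rcases h2 (Set.mem_univ w) with h | h
      · exact h
      · exact absurd hw h.2
    -- f depends only on the trace on A
    have cond : ∀ B' ∈ M, ∀ C ∈ M, A ∩ B' = A ∩ C → f B' A ⊆ f C A := by
      intro B' hB' C hC htr
      have hcA := hM_compl A hA
      have hCc : C ∪ (Set.univ \ A) ∈ M := hM_union C hC _ hcA
      have hsub : B' ⊆ C ∪ (Set.univ \ A) := by
        intro w hw
        by_cases hwA : w ∈ A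
        · have : w ∈ A ∩ C := htr ▸ ⟨hwA, hw⟩
          exact Or.inl this.2
        · exact Or.inr ⟨Set.mem_univ w, hwA⟩
      have h1 := mono B' hB' _ hCc hsub
      have h2 := hβ2 A hA C hC (Set.univ \ A) hcA
      rw [hfcA] at h2
      intro w hw
      rcases h2 (h1 hw) with h | h
      · exact h
      · exact absurd h (Set.notMem_empty w)
    have hfBA := hf A hA B hB
    have htr : A ∩ f B A = A ∩ B := trace A hA B hB
    exact Set.Subset.antisymm (cond _ hfBA B hB htr) (cond B hB _ hfBA htr.symm)
end

section
/- Let W be a set, M a Boolean subalgebra of the powerset of W, and f : M × M → M a function satisfying, for all sets in M: (β1) if A ⊆ B and A ≠ ∅ then f(B,A) = W; (β2) f(B ∪ C, A) ⊆ f(B,A) ∪ f(C,A); (β3) A ∩ f(B,A) ⊆ B; (β4) f(W \ B, A) = W \ f(B,A); (β6w) f(B,A) = B implies f(B, W \ A) = B. Then for all A, B ∈ M one has f(f(B,A), W \ A) = f(B,A). -/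
/-- Semantic form of the corollary of Lemma 2:
f(f(B,A), ∼A) = f(B,A). -/
theorem lemma2_corollary {W : Type*} (M : Set (Set W))
    (hM_univ : Set.univ ∈ M)
    (hM_inter : ∀ A ∈ M, ∀ B ∈ M, A ∩ B ∈ M)
    (hM_compl : ∀ A ∈ M, Set.univ \ A ∈ M)
    (f : Set W → Set W → Set W)
    (hf : ∀ A ∈ M, ∀ B ∈ M, f B A ∈ M)
    (hβ1 : ∀ A ∈ M, ∀ B ∈ M, A ⊆ B → A ≠ ∅ → f B A = Set.univ)
    (hβ2 : ∀ A ∈ M, ∀ B ∈ M, ∀ C ∈ M, f (B ∪ C) A ⊆ f B A ∪ f C A)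
    (hβ3 : ∀ A ∈ M, ∀ B ∈ M, A ∩ f B A ⊆ B)
    (hβ4 : ∀ A ∈ M, ∀ B ∈ M, f (Set.univ \ B) A = Set.univ \ f B A)
    (hβ6w : ∀ A ∈ M, ∀ B ∈ M, f B A = B → f B (Set.univ \ A) = B) :
    ∀ A ∈ M, ∀ B ∈ M, f (f B A) (Set.univ \ A) = f B A := by
  intro A hA B hB
  have hM_union : ∀ P ∈ M, ∀ Q ∈ M, P ∪ Q ∈ M := by
    intro P hP Q hQ
    have h : Set.univ \ (Set.univ \ P ∩ (Set.univ \ Q)) = P ∪ Q := by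
      ext x; simp [Set.mem_diff]; tauto
    have := hM_compl _ (hM_inter _ (hM_compl _ hP) _ (hM_compl _ hQ))
    rwa [h] at this
  have hcc : ∀ P : Set W, Set.univ \ (Set.univ \ P) = P := by
    intro P; ext x; simp
  by_cases hAe : A = ∅
  · -- A = ∅, so univ \ A = univ and f X univ = X for any X ∈ M
    subst hAe
    have huniv : ∀ X ∈ M, f X Set.univ = X := by
      intro X hX
      apply Set.Subset.antisymm
      · intro x hx
        exact hβ3 _ hM_univ _ hX ⟨Set.mem_univ x, hx⟩
      · intro x hx
        by_contra hnx
        have h1 : x ∈ f (Set.univ \ X) Set.univ := by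
          rw [hβ4 _ hM_univ _ hX]; exact ⟨Set.mem_univ x, hnx⟩
        have h2 := hβ3 _ hM_univ _ (hM_compl _ hX) ⟨Set.mem_univ x, h1⟩
        exact h2.2 hx
    have he : Set.univ \ (∅ : Set W) = Set.univ := by simp
    rw [he]
    have hEmptyM : (∅ : Set W) ∈ M := by simpa using hM_compl _ hM_univ
    exact huniv _ (hf _ hEmptyM _ hB)
  · -- A ≠ ∅
    have hfAA : f A A = Set.univ := hβ1 _ hA _ hA (le_refl A) hAe
    have hfunivA : f Set.univ A = Set.univ :=
      hβ1 _ hA _ hM_univ (Set.subset_univ A) hAe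
    have hfempty : f (∅ : Set W) A = ∅ := by
      have : f (Set.univ \ Set.univ) A = Set.univ \ f Set.univ A :=
        hβ4 _ hA _ hM_univ
      simpa [hfunivA] using this
    -- key intersection fact: f S A ∩ f T A ⊆ f (S ∩ T) A
    have hInter : ∀ S ∈ M, ∀ T ∈ M, f S A ∩ f T A ⊆ f (S ∩ T) A := by
      intro S hS T hT
      intro x hx
      by_contra hnx
      have hx1 : x ∈ f (Set.univ \ (S ∩ T)) A := by
        rw [hβ4 _ hA _ (hM_inter _ hS _ hT)]
        exact ⟨Set.mem_univ x, hnx⟩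
      have hrw : (Set.univ \ (S ∩ T)) = (Set.univ \ S) ∪ (Set.univ \ T) := by
        ext y; simp [Set.mem_diff]; tauto
      rw [hrw] at hx1
      have := hβ2 _ hA _ (hM_compl _ hS) _ (hM_compl _ hT) hx1
      rw [hβ4 _ hA _ hS, hβ4 _ hA _ hT] at this
      rcases this with h | h
      · exact h.2 hx.1
      · exact h.2 hx.2
    -- key restriction fact: f (S ∩ A) A = f S A
    have hRestr : ∀ S ∈ M, f (S ∩ A) A = f S A := by
      have hsup : ∀ S ∈ M, f S A ⊆ f (S ∩ A) A := by
        intro S hS x hx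
        exact hInter _ hS _ hA ⟨hx, by rw [hfAA]; exact Set.mem_univ x⟩
      intro S hS
      apply Set.Subset.antisymm
      · intro x hx
        -- disjointness of f(S∩A) and f(∁S∩A)
        by_contra hnx
        have hx2 : x ∈ f (Set.univ \ S) A := by
          rw [hβ4 _ hA _ hS]; exact ⟨Set.mem_univ x, hnx⟩
        have hx3 : x ∈ f ((Set.univ \ S) ∩ A) A := hsup _ (hM_compl _ hS) hx2
        have hdisj : f (S ∩ A) A ∩ f ((Set.univ \ S) ∩ A) A ⊆ f (∅ : Set W) A := by
          have h := hInter _ (hM_inter _ hS _ hA) _ (hM_inter _ (hM_compl _ hS) _ hA)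
          have hrw : (S ∩ A) ∩ ((Set.univ \ S) ∩ A) = (∅ : Set W) := by
            ext y; simp [Set.mem_diff]; tauto
          rwa [hrw] at h
        have := hdisj ⟨hx, hx3⟩
        rw [hfempty] at this
        exact this
      · exact hsup _ hS
    -- f B A agrees with B on A
    set X := f B A with hX
    have hXM : X ∈ M := hf _ hA _ hB
    have hXA : X ∩ A = B ∩ A := by
      have h1 : A ∩ X ⊆ B := hβ3 _ hA _ hB
      have h2 : A ∩ (Set.univ \ X) ⊆ Set.univ \ B := by
        have := hβ3 _ hA _ (hM_compl _ hB)
        rwa [hβ4 _ hA _ hB] at this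
      ext y
      constructor
      · rintro ⟨hy1, hy2⟩; exact ⟨h1 ⟨hy2, hy1⟩, hy2⟩
      · rintro ⟨hy1, hy2⟩
        refine ⟨?_, hy2⟩
        by_contra hny
        exact (h2 ⟨hy2, Set.mem_univ y, hny⟩).2 hy1
    have hfix : f X A = X := by
      calc f X A = f (X ∩ A) A := (hRestr _ hXM).symm
        _ = f (B ∩ A) A := by rw [hXA]
        _ = f B A := hRestr _ hB
        _ = X := rfl
    exact hβ6w _ hA _ hXM hfix
end

section
/- Let W be a set, M a Boolean subalgebra of the powerset of W, and f : M × M → M a function satisfying (β1): if A ⊆ B and A ≠ ∅ then f(B,A) = W, and (β6w): f(B,A) = B implies f(B, W \ A) = B, for all A,B ∈ M. Then for all A, B ∈ M, if f(B,A) = B and A ∪ B = W, then A = W or B = W. -/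
/-- Semantic form of 'Independence and proof': when propositions are
independent and their disjunction is sure, at least one is sure. -/
theorem independence_and_proof {W : Type*} (M : Set (Set W))
    (hM_univ : Set.univ ∈ M)
    (hM_inter : ∀ A ∈ M, ∀ B ∈ M, A ∩ B ∈ M)
    (hM_compl : ∀ A ∈ M, Set.univ \ A ∈ M)
    (f : Set W → Set W → Set W)
    (hf : ∀ A ∈ M, ∀ B ∈ M, f B A ∈ M)
    (hβ1 : ∀ A ∈ M, ∀ B ∈ M, A ⊆ B → A ≠ ∅ → f B A = Set.univ)
    (hβ6w : ∀ A ∈ M, ∀ B ∈ M, f B A = B → f B (Set.univ \ A) = B) :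
    ∀ A ∈ M, ∀ B ∈ M, f B A = B → A ∪ B = Set.univ →
      A = Set.univ ∨ B = Set.univ := by
  intro A hA B hB hind hun
  by_cases hcA : Set.univ \ A = ∅
  · left
    have : A = Set.univ := by
      ext x; simp only [Set.mem_univ, iff_true]
      by_contra hx
      have : x ∈ Set.univ \ A := ⟨trivial, hx⟩
      simp [hcA] at this
    exact this
  · right
    have hsub : Set.univ \ A ⊆ B := by
      intro x hx
      rcases (hun ▸ Set.mem_univ x : x ∈ A ∪ B) with h | h
      · exact absurd h hx.2
      · exact h
    have h1 := hβ1 (Set.univ \ A) (hM_compl A hA) B hB hsub hcA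
    have h2 := hβ6w A hA B hB hind
    rw [h1] at h2
    exact h2.symm
end

section
/- Let W be a set, M a Boolean subalgebra of the powerset of W, and f : M × M → M a function satisfying, for all sets in M: (β1) if A ⊆ B and A ≠ ∅ then f(B,A) = W; (β2) f(B ∪ C, A) ⊆ f(B,A) ∪ f(C,A); (β3) A ∩ f(B,A) ⊆ B; (β4) f(W \ B, A) = W \ f(B,A); (β6w) f(B,A) = B implies f(B, W \ A) = B. Then for all A, B, C ∈ M with f(A,C) = A, f(B,C) = B, C ≠ ∅ and A ∩ C ⊆ B ∩ C, one has A ⊆ B. -/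
/-- Semantic form of 'Independence and regularity': a nonempty proposition
may be removed from a logical equation when it appears on both sides and is
independent of the equation's components. -/
theorem independence_and_regularity {W : Type*} (M : Set (Set W))
    (hM_univ : Set.univ ∈ M)
    (hM_inter : ∀ A ∈ M, ∀ B ∈ M, A ∩ B ∈ M)
    (hM_compl : ∀ A ∈ M, Set.univ \ A ∈ M)
    (f : Set W → Set W → Set W)
    (hf : ∀ A ∈ M, ∀ B ∈ M, f B A ∈ M)
    (hβ1 : ∀ A ∈ M, ∀ B ∈ M, A ⊆ B → A ≠ ∅ → f B A = Set.univ)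
    (hβ2 : ∀ A ∈ M, ∀ B ∈ M, ∀ C ∈ M, f (B ∪ C) A ⊆ f B A ∪ f C A)
    (hβ3 : ∀ A ∈ M, ∀ B ∈ M, A ∩ f B A ⊆ B)
    (hβ4 : ∀ A ∈ M, ∀ B ∈ M, f (Set.univ \ B) A = Set.univ \ f B A)
    (hβ6w : ∀ A ∈ M, ∀ B ∈ M, f B A = B → f B (Set.univ \ A) = B) :
    ∀ A ∈ M, ∀ B ∈ M, ∀ C ∈ M,
      f A C = A → f B C = B → C ≠ ∅ → A ∩ C ⊆ B ∩ C → A ⊆ B := by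
  intro A hA B hB C hC hfA hfB hCne hsub
  set Bc : Set W := Set.univ \ B with hBc
  have hBcM : Bc ∈ M := hM_compl B hB
  set D : Set W := A ∩ Bc with hD
  have hDM : D ∈ M := hM_inter A hA Bc hBcM
  -- f Bc C = Bc
  have hfBc : f Bc C = Bc := by rw [hBc, hβ4 C hC B hB, hfB]
  have hAcM : Set.univ \ A ∈ M := hM_compl A hA
  have hBccM : Set.univ \ Bc ∈ M := hM_compl Bc hBcM
  set U : Set W := (Set.univ \ A) ∪ (Set.univ \ Bc) with hU
  have hUM : U ∈ M := by
    have hEq : U = Set.univ \ ((Set.univ \ (Set.univ \ A)) ∩ (Set.univ \ (Set.univ \ Bc))) := by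
      ext x; simp [hU]; tauto
    rw [hEq]
    exact hM_compl _ (hM_inter _ (hM_compl _ hAcM) _ (hM_compl _ hBccM))
  -- f U C ⊆ U  (via β2, β4, fixed points)
  have hfU : f U C ⊆ U := by
    have h2 := hβ2 C hC _ hAcM _ hBccM
    rwa [hβ4 C hC A hA, hβ4 C hC Bc hBcM, hfA, hfBc] at h2
  have hDeq : D = Set.univ \ U := by
    ext x; simp [hD, hU, hBc]
  -- D ⊆ f D C
  have hDsub : D ⊆ f D C := by
    rw [hDeq, hβ4 C hC U hUM]
    exact Set.diff_subset_diff_right hfU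
  -- C ⊆ Dᶜ, hence f (univ \ D) C = univ
  have hCsub : C ⊆ Set.univ \ D := by
    intro x hx
    refine ⟨Set.mem_univ x, ?_⟩
    rintro ⟨hxA, -, hxB⟩
    exact hxB (hsub ⟨hxA, hx⟩).1
  have h1 : f (Set.univ \ D) C = Set.univ := hβ1 C hC _ (hM_compl D hDM) hCsub hCne
  rw [hβ4 C hC D hDM] at h1
  have hfD : f D C = ∅ := by
    ext x
    simp only [Set.mem_empty_iff_false, iff_false]
    intro hx
    have := h1 ▸ Set.mem_univ x
    exact this.2 hx
  have hDempty : D = ∅ := by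
    rw [← Set.subset_empty_iff, ← hfD]; exact hDsub
  intro x hxA
  by_contra hxB
  have : x ∈ D := ⟨hxA, Set.mem_univ x, hxB⟩
  rw [hDempty] at this
  exact this
end

section
/- Let W be a set, M a Boolean subalgebra of the powerset of W, and f : M × M → M a function satisfying, for all sets in M: (β1) if A ⊆ B and A ≠ ∅ then f(B,A) = W; (β2) f(B ∪ C, A) ⊆ f(B,A) ∪ f(C,A); (β3) A ∩ f(B,A) ⊆ B; (β4) f(W \ B, A) = W \ f(B,A); (β6w) f(B,A) = B implies f(B, W \ A) = B. Then for all B, C, X ∈ M with C ≠ ∅, f(X,C) = X and X ∩ C = B ∩ C, one has X = f(B,C). -/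
/-- Semantic form of Corollary 2 to the regularity theorem: for nonempty φ,
(ψ|φ) is the unique solution X of X ∧ φ ≡ ψ ∧ φ independent of φ. -/
theorem conditional_uniqueness {W : Type*} (M : Set (Set W))
    (hM_univ : Set.univ ∈ M)
    (hM_inter : ∀ A ∈ M, ∀ B ∈ M, A ∩ B ∈ M)
    (hM_compl : ∀ A ∈ M, Set.univ \ A ∈ M)
    (f : Set W → Set W → Set W)
    (hf : ∀ A ∈ M, ∀ B ∈ M, f B A ∈ M)
    (hβ1 : ∀ A ∈ M, ∀ B ∈ M, A ⊆ B → A ≠ ∅ → f B A = Set.univ)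
    (hβ2 : ∀ A ∈ M, ∀ B ∈ M, ∀ C ∈ M, f (B ∪ C) A ⊆ f B A ∪ f C A)
    (hβ3 : ∀ A ∈ M, ∀ B ∈ M, A ∩ f B A ⊆ B)
    (hβ4 : ∀ A ∈ M, ∀ B ∈ M, f (Set.univ \ B) A = Set.univ \ f B A)
    (hβ6w : ∀ A ∈ M, ∀ B ∈ M, f B A = B → f B (Set.univ \ A) = B) :
    ∀ B ∈ M, ∀ C ∈ M, ∀ X ∈ M,
      C ≠ ∅ → f X C = X → X ∩ C = B ∩ C → X = f B C := by
  intro B hB C hC X hX hCne hXind hXC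
  -- f univ C = univ
  have huniv : f Set.univ C = Set.univ :=
    hβ1 C hC Set.univ hM_univ (Set.subset_univ C) hCne
  -- f ∅ C = ∅
  have hfempty : f (∅ : Set W) C = ∅ := by
    have h := hβ4 C hC Set.univ hM_univ
    simp [huniv] at h
    simpa using h
  -- superadditivity on intersections
  have hsup : ∀ P ∈ M, ∀ Q ∈ M, f P C ∩ f Q C ⊆ f (P ∩ Q) C := by
    intro P hP Q hQ
    have hPQ : P ∩ Q ∈ M := hM_inter P hP Q hQ
    have h4 : f (Set.univ \ (P ∩ Q)) C = Set.univ \ f (P ∩ Q) C :=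
      hβ4 C hC (P ∩ Q) hPQ
    have hrw : Set.univ \ (P ∩ Q) = (Set.univ \ P) ∪ (Set.univ \ Q) := by
      ext x; simp [and_or_left]; tauto
    have h2 : f (Set.univ \ (P ∩ Q)) C ⊆ f (Set.univ \ P) C ∪ f (Set.univ \ Q) C := by
      rw [hrw]
      exact hβ2 C hC _ (hM_compl P hP) _ (hM_compl Q hQ)
    rw [hβ4 C hC P hP, hβ4 C hC Q hQ, h4] at h2
    intro x hx
    by_contra hxn
    have : x ∈ Set.univ \ f (P ∩ Q) C := ⟨trivial, hxn⟩
    rcases h2 this with h | h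
    · exact h.2 hx.1
    · exact h.2 hx.2
  -- monotonicity
  have hmono : ∀ P ∈ M, ∀ Q ∈ M, P ⊆ Q → f P C ⊆ f Q C := by
    intro P hP Q hQ hPQ
    have hdisj : f P C ∩ f (Set.univ \ Q) C ⊆ f (P ∩ (Set.univ \ Q)) C :=
      hsup P hP _ (hM_compl Q hQ)
    have hPQe : P ∩ (Set.univ \ Q) = (∅ : Set W) := by
      ext x; simp; exact fun h => hPQ h
    rw [hPQe, hfempty, hβ4 C hC Q hQ] at hdisj
    intro x hx
    by_contra hxn
    exact hdisj ⟨hx, ⟨trivial, hxn⟩⟩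
  -- f P C depends only on P ∩ C
  have hkey : ∀ P ∈ M, f P C = f (P ∩ C) C := by
    intro P hP
    have hPC : P ∩ C ∈ M := hM_inter P hP C hC
    have hD : P ∩ (Set.univ \ C) ∈ M := hM_inter P hP _ (hM_compl C hC)
    have hDempty : f (P ∩ (Set.univ \ C)) C = ∅ := by
      have h1 : f (Set.univ \ (P ∩ (Set.univ \ C))) C = Set.univ :=
        hβ1 C hC _ (hM_compl _ hD) (by intro x hx; exact ⟨trivial, fun h => h.2.2 hx⟩) hCne
      have h4 := hβ4 C hC _ hD
      rw [h1] at h4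
      have := congrArg (Set.univ \ ·) h4
      simpa using this.symm
    have hun : P = (P ∩ C) ∪ (P ∩ (Set.univ \ C)) := by
      ext x; simp; tauto
    apply Set.Subset.antisymm
    · have h2 : f P C ⊆ f (P ∩ C) C ∪ f (P ∩ (Set.univ \ C)) C := by
        nth_rewrite 1 [hun]
        exact hβ2 C hC _ hPC _ hD
      rw [hDempty] at h2
      simpa using h2
    · exact hmono _ hPC _ hP Set.inter_subset_left
  calc X = f X C := hXind.symm
    _ = f (X ∩ C) C := hkey X hX
    _ = f (B ∩ C) C := by rw [hXC]
    _ = f B C := (hkey B hB).symm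
end

section
/- Let W be a set, M a Boolean subalgebra of the powerset of W, and f : M × M → M a function satisfying (β4): f(W \ B, A) = W \ f(B,A), and (β6): f(B,A) = B implies f(A,B) = A, for all A,B ∈ M. Then f satisfies (β6w): for all A, B ∈ M, f(B,A) = B implies f(B, W \ A) = B. -/
/-- Semantic form of the 'Axioms order' theorem: β4 and β6 imply β6w. -/
theorem b6_implies_b6w {W : Type*} (M : Set (Set W))
    (hM_univ : Set.univ ∈ M)
    (hM_inter : ∀ A ∈ M, ∀ B ∈ M, A ∩ B ∈ M)
    (hM_compl : ∀ A ∈ M, Set.univ \ A ∈ M)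
    (f : Set W → Set W → Set W)
    (hf : ∀ A ∈ M, ∀ B ∈ M, f B A ∈ M)
    (hβ4 : ∀ A ∈ M, ∀ B ∈ M, f (Set.univ \ B) A = Set.univ \ f B A)
    (hβ6 : ∀ A ∈ M, ∀ B ∈ M, f B A = B → f A B = A) :
    ∀ A ∈ M, ∀ B ∈ M, f B A = B → f B (Set.univ \ A) = B := by
  intro A hA B hB h
  have h1 : f A B = A := hβ6 A hA B hB h
  have h2 : f (Set.univ \ A) B = Set.univ \ A := by
    rw [hβ4 B hB A hA, h1]
  exact hβ6 B hB (Set.univ \ A) (hM_compl A hA) h2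
end

section
/- Let W be a set, M a Boolean subalgebra of the powerset of W, and f : M × M → M a function satisfying, for all sets in M: (β1) if A ⊆ B and A ≠ ∅ then f(B,A) = W; (β2) f(B ∪ C, A) ⊆ f(B,A) ∪ f(C,A); (β3) A ∩ f(B,A) ⊆ B; (β4) f(W \ B, A) = W \ f(B,A); (β6) f(B,A) = B implies f(A,B) = A. Then for all A, B ∈ M one has f(A, f(B,A)) = A. -/
/-- Semantic form of the 'Reduction rule': axiom b6 implies (φ|(ψ|φ)) ≡ φ. -/
theorem reduction_rule {W : Type*} (M : Set (Set W))
    (hM_univ : Set.univ ∈ M)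
    (hM_inter : ∀ A ∈ M, ∀ B ∈ M, A ∩ B ∈ M)
    (hM_compl : ∀ A ∈ M, Set.univ \ A ∈ M)
    (f : Set W → Set W → Set W)
    (hf : ∀ A ∈ M, ∀ B ∈ M, f B A ∈ M)
    (hβ1 : ∀ A ∈ M, ∀ B ∈ M, A ⊆ B → A ≠ ∅ → f B A = Set.univ)
    (hβ2 : ∀ A ∈ M, ∀ B ∈ M, ∀ C ∈ M, f (B ∪ C) A ⊆ f B A ∪ f C A)
    (hβ3 : ∀ A ∈ M, ∀ B ∈ M, A ∩ f B A ⊆ B)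
    (hβ4 : ∀ A ∈ M, ∀ B ∈ M, f (Set.univ \ B) A = Set.univ \ f B A)
    (hβ6 : ∀ A ∈ M, ∀ B ∈ M, f B A = B → f A B = A) :
    ∀ A ∈ M, ∀ B ∈ M, f A (f B A) = A := by
  have hemp : (∅ : Set W) ∈ M := by simpa using hM_compl _ hM_univ
  intro A hA B hB
  by_cases hAe : A = ∅
  · subst hAe
    by_cases hCe : f B ∅ = ∅
    · rw [hCe]
      rcases isEmpty_or_nonempty W with h | h
      · exact Set.eq_empty_of_isEmpty _
      · have huniv : (Set.univ : Set W) ≠ ∅ := by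
          simp [Set.univ_eq_empty_iff, not_isEmpty_of_nonempty]
        have h1 : f Set.univ Set.univ = Set.univ :=
          hβ1 _ hM_univ _ hM_univ subset_rfl huniv
        have h2 : f ∅ Set.univ = ∅ := by
          have h4 := hβ4 _ hM_univ _ hM_univ
          rw [h1] at h4; simpa using h4
        have h3 : f Set.univ ∅ = Set.univ := hβ6 _ hM_univ _ hemp h2
        have h4 := hβ4 _ hemp _ hM_univ
        rw [h3] at h4; simpa using h4
    · have h1 : f Set.univ (f B ∅) = Set.univ :=
        hβ1 _ (hf _ hemp _ hB) _ hM_univ (Set.subset_univ _) hCe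
      have h4 := hβ4 _ (hf _ hemp _ hB) _ hM_univ
      rw [h1] at h4; simpa using h4
  · -- main case : A ≠ ∅
    have hAc : Set.univ \ A ∈ M := hM_compl A hA
    -- superadditivity on intersections
    have hinter : ∀ X ∈ M, ∀ Y ∈ M, f X A ∩ f Y A ⊆ f (X ∩ Y) A := by
      intro X hX Y hY
      have h2 := hβ2 A hA _ (hM_compl X hX) _ (hM_compl Y hY)
      have e : (Set.univ \ X) ∪ (Set.univ \ Y) = Set.univ \ (X ∩ Y) := by
        rw [Set.diff_inter]
      rw [e, hβ4 A hA _ (hM_inter X hX Y hY), hβ4 A hA X hX, hβ4 A hA Y hY] at h2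
      intro x hx
      by_contra hxn
      have hmem : x ∈ (Set.univ \ f X A) ∪ (Set.univ \ f Y A) := h2 ⟨trivial, hxn⟩
      rcases hmem with h | h
      · exact h.2 hx.1
      · exact h.2 hx.2
    have hfull : f A A = Set.univ := hβ1 A hA A hA subset_rfl hAe
    have hempty' : f ∅ A = ∅ := by
      have h4 := hβ4 A hA _ hM_univ
      rw [hβ1 A hA _ hM_univ (Set.subset_univ A) hAe] at h4
      simpa using h4
    have hmono : ∀ X ∈ M, ∀ Y ∈ M, X ⊆ Y → f X A ⊆ f Y A := by
      intro X hX Y hY hXY x hx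
      by_contra hxY
      have hxYc : x ∈ f (Set.univ \ Y) A := by
        rw [hβ4 A hA Y hY]; exact ⟨trivial, hxY⟩
      have hmem := hinter X hX _ (hM_compl Y hY) ⟨hx, hxYc⟩
      have e : X ∩ (Set.univ \ Y) = ∅ := by
        ext z; simp only [Set.mem_inter_iff, Set.mem_diff, Set.mem_univ, true_and,
          Set.mem_empty_iff_false, iff_false]
        rintro ⟨hz1, hz2⟩; exact hz2 (hXY hz1)
      rw [e, hempty'] at hmem
      exact hmem
    -- f only depends on the trace on A
    have hkey : ∀ X ∈ M, ∀ Y ∈ M, X ∩ A = Y ∩ A → f X A ⊆ f Y A := by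
      intro X hX Y hY hXY x hx
      have h1 : x ∈ f (X ∩ A) A := by
        refine hinter X hX A hA ⟨hx, ?_⟩
        rw [hfull]; trivial
      rw [hXY] at h1
      exact hmono _ (hM_inter Y hY A hA) Y hY Set.inter_subset_left h1
    have htrace : ∀ X ∈ M, ∀ Y ∈ M, X ∩ A = Y ∩ A → f X A = f Y A := by
      intro X hX Y hY hXY
      exact Set.Subset.antisymm (hkey X hX Y hY hXY) (hkey Y hY X hX hXY.symm)
    -- trace of f B A equals trace of B
    have hC : f B A ∈ M := hf A hA B hB
    have htr : f B A ∩ A = B ∩ A := by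
      apply Set.Subset.antisymm
      · intro x hx
        exact ⟨hβ3 A hA B hB ⟨hx.2, hx.1⟩, hx.2⟩
      · intro x hx
        refine ⟨?_, hx.2⟩
        by_contra hxC
        have h3 := hβ3 A hA _ (hM_compl B hB)
        rw [hβ4 A hA B hB] at h3
        exact (h3 ⟨hx.2, ⟨trivial, hxC⟩⟩).2 hx.1
    have hfix : f (f B A) A = f B A := htrace _ hC _ hB htr
    exact hβ6 A hA _ hC hfix
end

section
/- Let W be a set, M a Boolean subalgebra of the powerset of W, and f : M × M → M a function satisfying, for all sets in M: (β1) if A ⊆ B and A ≠ ∅ then f(B,A) = W; (β2) f(B ∪ C, A) ⊆ f(B,A) ∪ f(C,A); (β3) A ∩ f(B,A) ⊆ B; (β4) f(W \ B, A) = W \ f(B,A); (β6w) f(B,A) = B implies f(B, W \ A) = B. Then for all A, B, C ∈ M: (i) if f(B,A) = B then f(W \ B, A) = W \ B; and (ii) if f(B,A) = B and f(C,A) = C then f(B ∩ C, A) = B ∩ C. -/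
/-- Auxiliary: lower bound `f X A ∩ f Y A ⊆ f (X ∩ Y) A` from β2 and β4. -/
lemma indep_aux_inter {W : Type*} (M : Set (Set W))
    (hM_inter : ∀ A ∈ M, ∀ B ∈ M, A ∩ B ∈ M)
    (hM_compl : ∀ A ∈ M, Set.univ \ A ∈ M)
    (f : Set W → Set W → Set W)
    (hβ2 : ∀ A ∈ M, ∀ B ∈ M, ∀ C ∈ M, f (B ∪ C) A ⊆ f B A ∪ f C A)
    (hβ4 : ∀ A ∈ M, ∀ B ∈ M, f (Set.univ \ B) A = Set.univ \ f B A)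
    {A X Y : Set W} (hA : A ∈ M) (hX : X ∈ M) (hY : Y ∈ M) :
    f X A ∩ f Y A ⊆ f (X ∩ Y) A := by
  have key : f (Set.univ \ (X ∩ Y)) A ⊆ Set.univ \ (f X A ∩ f Y A) := by
    rw [Set.diff_inter]
    calc f (Set.univ \ X ∪ Set.univ \ Y) A
        ⊆ f (Set.univ \ X) A ∪ f (Set.univ \ Y) A :=
          hβ2 A hA _ (hM_compl X hX) _ (hM_compl Y hY)
      _ = (Set.univ \ f X A) ∪ (Set.univ \ f Y A) := by
          rw [hβ4 A hA X hX, hβ4 A hA Y hY]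
      _ = Set.univ \ (f X A ∩ f Y A) := (Set.diff_inter).symm
  rw [hβ4 A hA _ (hM_inter X hX Y hY)] at key
  intro x hx
  by_contra hxn
  exact (key ⟨Set.mem_univ x, hxn⟩).2 hx

/-- Auxiliary: the main case `A ≠ ∅`. -/
lemma indep_aux_main {W : Type*} (M : Set (Set W))
    (hM_univ : Set.univ ∈ M)
    (hM_inter : ∀ A ∈ M, ∀ B ∈ M, A ∩ B ∈ M)
    (hM_compl : ∀ A ∈ M, Set.univ \ A ∈ M)
    (f : Set W → Set W → Set W)
    (hβ1 : ∀ A ∈ M, ∀ B ∈ M, A ⊆ B → A ≠ ∅ → f B A = Set.univ)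
    (hβ2 : ∀ A ∈ M, ∀ B ∈ M, ∀ C ∈ M, f (B ∪ C) A ⊆ f B A ∪ f C A)
    (hβ4 : ∀ A ∈ M, ∀ B ∈ M, f (Set.univ \ B) A = Set.univ \ f B A)
    {A B C : Set W} (hA : A ∈ M) (hAne : A ≠ ∅) (hB : B ∈ M) (hC : C ∈ M)
    (hfB : f B A = B) (hfC : f C A = C) : f (B ∩ C) A = B ∩ C := by
  have hBC : B ∩ C ∈ M := hM_inter B hB C hC
  -- f ∅ A = ∅
  have hempty : f (∅ : Set W) A = ∅ := by
    have h1 : f (Set.univ : Set W) A = Set.univ :=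
      hβ1 A hA _ hM_univ (Set.subset_univ A) hAne
    have h2 := hβ4 A hA Set.univ hM_univ
    rw [Set.diff_self, h1, Set.diff_self] at h2
    exact h2
  -- upper bound: f (B ∩ C) A ⊆ B
  have hsubB : f (B ∩ C) A ⊆ B := by
    intro x hx
    by_contra hxB
    have hxBc : x ∈ f (Set.univ \ B) A := by
      rw [hβ4 A hA B hB, hfB]; exact ⟨Set.mem_univ x, hxB⟩
    have : x ∈ f ((B ∩ C) ∩ (Set.univ \ B)) A :=
      indep_aux_inter M hM_inter hM_compl f hβ2 hβ4 hA hBC (hM_compl B hB) ⟨hx, hxBc⟩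
    have heq : (B ∩ C) ∩ (Set.univ \ B) = (∅ : Set W) := by
      ext y; simp; tauto
    rw [heq, hempty] at this
    exact this
  have hsubC : f (B ∩ C) A ⊆ C := by
    intro x hx
    by_contra hxC
    have hxCc : x ∈ f (Set.univ \ C) A := by
      rw [hβ4 A hA C hC, hfC]; exact ⟨Set.mem_univ x, hxC⟩
    have : x ∈ f ((B ∩ C) ∩ (Set.univ \ C)) A :=
      indep_aux_inter M hM_inter hM_compl f hβ2 hβ4 hA hBC (hM_compl C hC) ⟨hx, hxCc⟩
    have heq : (B ∩ C) ∩ (Set.univ \ C) = (∅ : Set W) := by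
      ext y; simp
    rw [heq, hempty] at this
    exact this
  -- lower bound
  have hsup : B ∩ C ⊆ f (B ∩ C) A := by
    have := indep_aux_inter M hM_inter hM_compl f hβ2 hβ4 hA hB hC
    rw [hfB, hfC] at this
    exact this
  exact Set.Subset.antisymm (Set.subset_inter hsubB hsubC) hsup

/-- Semantic form of 'Independence invariance':
(ψ × φ) → (¬ψ × φ) and ((ψ × φ) ∧ (η × φ)) → ((ψ ∧ η) × φ). -/
theorem independence_invariance {W : Type*} (M : Set (Set W))
    (hM_univ : Set.univ ∈ M)
    (hM_inter : ∀ A ∈ M, ∀ B ∈ M, A ∩ B ∈ M)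
    (hM_compl : ∀ A ∈ M, Set.univ \ A ∈ M)
    (f : Set W → Set W → Set W)
    (hf : ∀ A ∈ M, ∀ B ∈ M, f B A ∈ M)
    (hβ1 : ∀ A ∈ M, ∀ B ∈ M, A ⊆ B → A ≠ ∅ → f B A = Set.univ)
    (hβ2 : ∀ A ∈ M, ∀ B ∈ M, ∀ C ∈ M, f (B ∪ C) A ⊆ f B A ∪ f C A)
    (hβ3 : ∀ A ∈ M, ∀ B ∈ M, A ∩ f B A ⊆ B)
    (hβ4 : ∀ A ∈ M, ∀ B ∈ M, f (Set.univ \ B) A = Set.univ \ f B A)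
    (hβ6w : ∀ A ∈ M, ∀ B ∈ M, f B A = B → f B (Set.univ \ A) = B) :
    ∀ A ∈ M, ∀ B ∈ M, ∀ C ∈ M,
      (f B A = B → f (Set.univ \ B) A = Set.univ \ B) ∧
      (f B A = B → f C A = C → f (B ∩ C) A = B ∩ C) := by
  intro A hA B hB C hC
  constructor
  · intro hfB
    rw [hβ4 A hA B hB, hfB]
  · intro hfB hfC
    by_cases hAne : A = ∅
    · subst hAne
      by_cases hW : (Set.univ : Set W) = ∅
      · have : IsEmpty W := Set.univ_eq_empty_iff.mp hW
        simp [Set.eq_empty_of_isEmpty]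
      · have hB' : f B (Set.univ : Set W) = B := by
          have := hβ6w ∅ hA B hB hfB
          rwa [Set.diff_empty] at this
        have hC' : f C (Set.univ : Set W) = C := by
          have := hβ6w ∅ hA C hC hfC
          rwa [Set.diff_empty] at this
        have hmain : f (B ∩ C) Set.univ = B ∩ C :=
          indep_aux_main M hM_univ hM_inter hM_compl f hβ1 hβ2 hβ4
            hM_univ hW hB hC hB' hC'
        have := hβ6w Set.univ hM_univ (B ∩ C) (hM_inter B hB C hC) hmain
        rwa [Set.diff_self] at this
    · exact indep_aux_main M hM_univ hM_inter hM_compl f hβ1 hβ2 hβ4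
        hA hAne hB hC hfB hfC
end

section
/- Let W be a set, M a Boolean subalgebra of the powerset of W, and f : M × M → M a function satisfying (β3): A ∩ f(B,A) ⊆ B, and (β4): f(W \ B, A) = W \ f(B,A), for all A,B ∈ M. Then for all A, B, E ∈ M one has f(f(E,B), A) ∩ (A ∩ B) = f(E, A ∩ B) ∩ (A ∩ B). -/
/-- Semantic form of 'Link between ((η|ψ)|φ) and (η|φ∧ψ)':
((η|ψ)|φ) ∧ (φ∧ψ) ≡ (η|φ∧ψ) ∧ (φ∧ψ). -/
theorem iterated_conditional_link {W : Type*} (M : Set (Set W))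
    (hM_univ : Set.univ ∈ M)
    (hM_inter : ∀ A ∈ M, ∀ B ∈ M, A ∩ B ∈ M)
    (hM_compl : ∀ A ∈ M, Set.univ \ A ∈ M)
    (f : Set W → Set W → Set W)
    (hf : ∀ A ∈ M, ∀ B ∈ M, f B A ∈ M)
    (hβ3 : ∀ A ∈ M, ∀ B ∈ M, A ∩ f B A ⊆ B)
    (hβ4 : ∀ A ∈ M, ∀ B ∈ M, f (Set.univ \ B) A = Set.univ \ f B A) :
    ∀ A ∈ M, ∀ B ∈ M, ∀ E ∈ M,
      f (f E B) A ∩ (A ∩ B) = f E (A ∩ B) ∩ (A ∩ B) := by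
  -- key: on A, f B A agrees with B
  have key : ∀ A ∈ M, ∀ B ∈ M, ∀ x, x ∈ A → (x ∈ f B A ↔ x ∈ B) := by
    intro A hA B hB x hx
    constructor
    · intro h; exact hβ3 A hA B hB ⟨hx, h⟩
    · intro h
      by_contra hc
      have hx' : x ∈ f (Set.univ \ B) A := by
        rw [hβ4 A hA B hB]; exact ⟨Set.mem_univ x, hc⟩
      exact (hβ3 A hA _ (hM_compl B hB) ⟨hx, hx'⟩).2 h
  intro A hA B hB E hE
  ext x
  simp only [Set.mem_inter_iff]
  constructor
  · rintro ⟨h1, hxA, hxB⟩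
    refine ⟨?_, hxA, hxB⟩
    have := ((key A hA (f E B) (hf B hB E hE) x hxA).1 h1)
    have hxE := (key B hB E hE x hxB).1 this
    exact (key (A ∩ B) (hM_inter A hA B hB) E hE x ⟨hxA, hxB⟩).2 hxE
  · rintro ⟨h1, hxA, hxB⟩
    refine ⟨?_, hxA, hxB⟩
    have hxE := (key (A ∩ B) (hM_inter A hA B hB) E hE x ⟨hxA, hxB⟩).1 h1
    have := (key B hB E hE x hxB).2 hxE
    exact (key A hA (f E B) (hf B hB E hE) x hxA).2 this
end

section
/- Let W be a set, M a Boolean subalgebra of the powerset of W, and f : M × M → M a function satisfying, for all sets in M: (β1) if A ⊆ B and A ≠ ∅ then f(B,A) = W; (β3) A ∩ f(B,A) ⊆ B; (β4) f(W \ B, A) = W \ f(B,A); (β6) f(B,A) = B implies f(A,B) = A; and additionally the composition law f(f(E,D), C) = f(E, C ∩ D) for all C, D, E ∈ M. Then for all A, B ∈ M with A ∩ B ≠ ∅, either A = B or f(B,A) = B. -/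
/-- Semantic form of the logical counterpart of Lewis' triviality derived
from the controversial axiom ((η|ψ)|φ) ≡ (η|φ∧ψ): non-exclusive propositions
are either equivalent or independent. -/
theorem lewis_logical_triviality {W : Type*} (M : Set (Set W))
    (hM_univ : Set.univ ∈ M)
    (hM_inter : ∀ A ∈ M, ∀ B ∈ M, A ∩ B ∈ M)
    (hM_compl : ∀ A ∈ M, Set.univ \ A ∈ M)
    (f : Set W → Set W → Set W)
    (hf : ∀ A ∈ M, ∀ B ∈ M, f B A ∈ M)
    (hβ1 : ∀ A ∈ M, ∀ B ∈ M, A ⊆ B → A ≠ ∅ → f B A = Set.univ)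
    (hβ3 : ∀ A ∈ M, ∀ B ∈ M, A ∩ f B A ⊆ B)
    (hβ4 : ∀ A ∈ M, ∀ B ∈ M, f (Set.univ \ B) A = Set.univ \ f B A)
    (hβ6 : ∀ A ∈ M, ∀ B ∈ M, f B A = B → f A B = A)
    (hcomp : ∀ C ∈ M, ∀ D ∈ M, ∀ E ∈ M, f (f E D) C = f E (C ∩ D)) :
    ∀ A ∈ M, ∀ B ∈ M, A ∩ B ≠ ∅ → A = B ∨ f B A = B := by
  -- Key lemma: if X ∩ Y ≠ ∅ then Y ⊆ f Y X.
  have key : ∀ X ∈ M, ∀ Y ∈ M, X ∩ Y ≠ ∅ → Y ⊆ f Y X := by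
    intro X hX Y hY hne
    have h1 : f (f Y X) Y = f Y (Y ∩ X) := hcomp Y hY X hX Y hY
    have h2 : f Y (Y ∩ X) = Set.univ := by
      apply hβ1 (Y ∩ X) (hM_inter Y hY X hX) Y hY Set.inter_subset_left
      rw [Set.inter_comm] at hne; exact hne
    have h3 : Y ∩ f (f Y X) Y ⊆ f Y X := hβ3 Y hY (f Y X) (hf X hX Y hY)
    rw [h1, h2, Set.inter_univ] at h3
    exact h3
  intro A hA B hB hne
  by_cases hcase : A ∩ (Set.univ \ B) = ∅
  · -- A ⊆ B
    have hAB : A ⊆ B := by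
      intro x hx
      by_contra hxB
      exact Set.eq_empty_iff_forall_notMem.mp hcase x ⟨hx, Set.mem_univ x, hxB⟩
    by_cases hcase2 : B ∩ (Set.univ \ A) = ∅
    · left
      apply Set.Subset.antisymm hAB
      intro x hx
      by_contra hxA
      exact Set.eq_empty_iff_forall_notMem.mp hcase2 x ⟨hx, Set.mem_univ x, hxA⟩
    · right
      -- show f A B = A, then β6
      have h1 : A ⊆ f A B := key B hB A hA (by rw [Set.inter_comm]; exact hne)
      have h2 : (Set.univ \ A) ⊆ f (Set.univ \ A) B :=
        key B hB (Set.univ \ A) (hM_compl A hA) hcase2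
      rw [hβ4 B hB A hA] at h2
      have hfAB : f A B = A := by
        apply Set.Subset.antisymm _ h1
        intro x hx
        by_contra hxA
        exact (h2 ⟨Set.mem_univ x, hxA⟩).2 hx
      exact hβ6 B hB A hA hfAB
  · right
    have h1 : B ⊆ f B A := key A hA B hB hne
    have h2 : (Set.univ \ B) ⊆ f (Set.univ \ B) A :=
      key A hA (Set.univ \ B) (hM_compl B hB) hcase
    rw [hβ4 A hA B hB] at h2
    apply Set.Subset.antisymm _ h1
    intro x hx
    by_contra hxB
    exact (h2 ⟨Set.mem_univ x, hxB⟩).2 hx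
end

section
/- Let Ω be a measurable space in which every singleton is measurable, and let A, B be measurable subsets of Ω with B ⊆ A. Suppose there exist points x ∈ B, y ∈ A \ B and z ∈ Ω \ A. Then there exists no measurable set C ⊆ Ω such that for every probability measure π on Ω with π(A) > 0 one has π(C) · π(A) = π(A ∩ B). -/
open MeasureTheory
open scoped ENNReal

/-- Lewis' triviality theorem: for ∅ ⊊ B ⊊ A ⊊ Ω it is impossible to
construct a measurable proposition (B|A) whose probability equals the
conditional probability π(A ∩ B)/π(A) for every probability measure π
with π(A) > 0. -/
theorem lewis_triviality {Ω : Type*} [MeasurableSpace Ω]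
    [MeasurableSingletonClass Ω]
    (A B : Set Ω) (hA : MeasurableSet A) (hB : MeasurableSet B)
    (hBA : B ⊆ A)
    (x y z : Ω) (hx : x ∈ B) (hy : y ∈ A \ B) (hz : z ∈ Set.univ \ A) :
    ¬ ∃ C : Set Ω, MeasurableSet C ∧
        ∀ π : Measure Ω, IsProbabilityMeasure π → 0 < π A →
          π C * π A = π (A ∩ B) := by
  rintro ⟨C, hC, hπ⟩
  have hxA : x ∈ A := hBA hx
  have hzA : z ∉ A := hz.2
  have hyA : y ∈ A := hy.1
  have hyB : y ∉ B := hy.2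
  -- π₁ = ½ δ_x + ½ δ_z
  set π1 : Measure Ω := (2⁻¹ : ℝ≥0∞) • Measure.dirac x + (2⁻¹ : ℝ≥0∞) • Measure.dirac z
    with hπ1def
  have hp1 : IsProbabilityMeasure π1 := by
    constructor
    simp only [hπ1def, Measure.add_apply, Measure.smul_apply, smul_eq_mul,
      measure_univ, mul_one]
    exact ENNReal.inv_two_add_inv_two
  have h1A : π1 A = 2⁻¹ := by
    simp [hπ1def, Measure.dirac_apply' _ hA, Set.indicator_of_mem hxA,
      Set.indicator_of_notMem hzA]
  have h1AB : π1 (A ∩ B) = 2⁻¹ := by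
    have hxAB : x ∈ A ∩ B := ⟨hxA, hx⟩
    have hzAB : z ∉ A ∩ B := fun h => hzA h.1
    simp [hπ1def, Measure.dirac_apply' _ (hA.inter hB), Set.indicator_of_mem hxAB,
      Set.indicator_of_notMem hzAB]
  have e1 := hπ π1 hp1 (by rw [h1A]; norm_num)
  rw [h1A, h1AB] at e1
  have h1C : π1 C = 1 := by
    rw [mul_comm] at e1
    have : (2⁻¹ : ℝ≥0∞) * π1 C = 2⁻¹ * 1 := by rw [e1, mul_one]
    exact (ENNReal.mul_right_inj (by norm_num) (by norm_num)).mp this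
  have hzC : z ∈ C := by
    by_contra hzC
    have hle : π1 C ≤ 2⁻¹ := by
      have hd : Measure.dirac z C = 0 := by
        simp [Measure.dirac_apply' _ hC, Set.indicator_of_notMem hzC]
      have hd2 : Measure.dirac x C ≤ 1 := prob_le_one
      calc π1 C = 2⁻¹ * Measure.dirac x C + 2⁻¹ * Measure.dirac z C := by
            simp [hπ1def]
        _ ≤ 2⁻¹ * 1 + 2⁻¹ * 0 := by
            gcongr
            exact hd.le
        _ = 2⁻¹ := by norm_num
    rw [h1C] at hle
    norm_num at hle
  -- π₂ = ½ δ_y + ½ δ_z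
  set π2 : Measure Ω := (2⁻¹ : ℝ≥0∞) • Measure.dirac y + (2⁻¹ : ℝ≥0∞) • Measure.dirac z
    with hπ2def
  have hp2 : IsProbabilityMeasure π2 := by
    constructor
    simp only [hπ2def, Measure.add_apply, Measure.smul_apply, smul_eq_mul,
      measure_univ, mul_one]
    exact ENNReal.inv_two_add_inv_two
  have h2A : π2 A = 2⁻¹ := by
    simp [hπ2def, Measure.dirac_apply' _ hA, Set.indicator_of_mem hyA,
      Set.indicator_of_notMem hzA]
  have h2AB : π2 (A ∩ B) = 0 := by
    have hyAB : y ∉ A ∩ B := fun h => hyB h.2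
    have hzAB : z ∉ A ∩ B := fun h => hzA h.1
    simp [hπ2def, Measure.dirac_apply' _ (hA.inter hB), Set.indicator_of_notMem hyAB,
      Set.indicator_of_notMem hzAB]
  have e2 := hπ π2 hp2 (by rw [h2A]; norm_num)
  rw [h2A, h2AB, mul_eq_zero] at e2
  have h2C : π2 C = 0 := by
    rcases e2 with h | h
    · exact h
    · norm_num at h
  have hge : (2⁻¹ : ℝ≥0∞) ≤ π2 C := by
    have hd : Measure.dirac z C = 1 := by
      simp [Measure.dirac_apply' _ hC, Set.indicator_of_mem hzC]
    calc (2⁻¹ : ℝ≥0∞) = 2⁻¹ * Measure.dirac z C := by rw [hd, mul_one]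
      _ ≤ π2 C := by
          simp only [hπ2def, Measure.add_apply, Measure.smul_apply, smul_eq_mul]
          exact le_add_self
  rw [h2C] at hge
  norm_num at hge
end

section
/- Let W be a set, M a Boolean subalgebra of the powerset of W, and f : M × M → M a function satisfying, for all sets in M: (β1) if A ⊆ B and A ≠ ∅ then f(B,A) = W; (β2) f(B ∪ C, A) ⊆ f(B,A) ∪ f(C,A); (β3) A ∩ f(B,A) ⊆ B; (β4) f(W \ B, A) = W \ f(B,A); (β6w) f(B,A) = B implies f(B, W \ A) = B. Let P : M → ℝ be a nonnegative function satisfying additivity P(X ∩ Y) + P(X ∪ Y) = P(X) + P(Y) for all X, Y ∈ M, coherence P(∅) = 0, finiteness P(W) = 1, and multiplicativity: for all X, Y ∈ M, f(Y,X) = Y implies P(X ∩ Y) = P(X) · P(Y). Then for all A, B ∈ M one has P(f(B,A)) · P(A) = P(A ∩ B). -/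
/-- Semantic form of the 'Bayes inference' theorem:
P(ψ|φ) · P(φ) = P(φ ∧ ψ). -/
theorem bayes_inference {W : Type*} (M : Set (Set W))
    (hM_univ : Set.univ ∈ M)
    (hM_inter : ∀ A ∈ M, ∀ B ∈ M, A ∩ B ∈ M)
    (hM_compl : ∀ A ∈ M, Set.univ \ A ∈ M)
    (f : Set W → Set W → Set W)
    (hf : ∀ A ∈ M, ∀ B ∈ M, f B A ∈ M)
    (hβ1 : ∀ A ∈ M, ∀ B ∈ M, A ⊆ B → A ≠ ∅ → f B A = Set.univ)
    (hβ2 : ∀ A ∈ M, ∀ B ∈ M, ∀ C ∈ M, f (B ∪ C) A ⊆ f B A ∪ f C A)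
    (hβ3 : ∀ A ∈ M, ∀ B ∈ M, A ∩ f B A ⊆ B)
    (hβ4 : ∀ A ∈ M, ∀ B ∈ M, f (Set.univ \ B) A = Set.univ \ f B A)
    (hβ6w : ∀ A ∈ M, ∀ B ∈ M, f B A = B → f B (Set.univ \ A) = B)
    (P : Set W → ℝ)
    (hP_nonneg : ∀ X ∈ M, 0 ≤ P X)
    (hP_add : ∀ X ∈ M, ∀ Y ∈ M, P (X ∩ Y) + P (X ∪ Y) = P X + P Y)
    (hP_coh : P (∅ : Set W) = 0)
    (hP_fin : P (Set.univ : Set W) = 1)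
    (hP_mult : ∀ X ∈ M, ∀ Y ∈ M, f Y X = Y → P (X ∩ Y) = P X * P Y) :
    ∀ A ∈ M, ∀ B ∈ M, P (f B A) * P A = P (A ∩ B) := by
  intro A hA B hB
  by_cases hAe : A = (∅ : Set W)
  · subst hAe
    simp [hP_coh]
  · -- A ≠ ∅
    have hAcM : Set.univ \ A ∈ M := hM_compl A hA
    have hfu : f Set.univ A = Set.univ :=
      hβ1 A hA Set.univ hM_univ (Set.subset_univ A) hAe
    have hfe : f (∅ : Set W) A = ∅ := by
      have h := hβ4 A hA Set.univ hM_univ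
      simpa [hfu] using h
    -- superadditivity: f X A ∩ f Y A ⊆ f (X ∩ Y) A
    have hsup : ∀ X ∈ M, ∀ Y ∈ M, f X A ∩ f Y A ⊆ f (X ∩ Y) A := by
      intro X hX Y hY
      have h2 := hβ2 A hA (Set.univ \ X) (hM_compl X hX) (Set.univ \ Y) (hM_compl Y hY)
      rw [← Set.diff_inter, hβ4 A hA X hX, hβ4 A hA Y hY,
        hβ4 A hA (X ∩ Y) (hM_inter X hX Y hY)] at h2
      intro x hx
      by_contra hxn
      have hx' : x ∈ Set.univ \ f (X ∩ Y) A := ⟨trivial, hxn⟩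
      rcases h2 hx' with h | h
      · exact h.2 hx.1
      · exact h.2 hx.2
    -- monotonicity
    have hmono : ∀ X ∈ M, ∀ Y ∈ M, X ⊆ Y → f X A ⊆ f Y A := by
      intro X hX Y hY hXY
      have h := hsup X hX (Set.univ \ Y) (hM_compl Y hY)
      have hXY' : X ∩ (Set.univ \ Y) = ∅ := by
        ext x; simp only [Set.mem_inter_iff, Set.mem_diff, Set.mem_univ, true_and,
          Set.mem_empty_iff_false, iff_false]
        rintro ⟨hx1, hx2⟩; exact hx2 (hXY hx1)
      rw [hXY', hfe, hβ4 A hA Y hY] at h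
      intro x hx
      by_contra hxn
      exact h ⟨hx, trivial, hxn⟩
    set C := f B A with hC
    have hCM : C ∈ M := hf A hA B hB
    have hAC : A ∩ C = A ∩ B := by
      apply Set.Subset.antisymm
      · exact Set.subset_inter Set.inter_subset_left (hβ3 A hA B hB)
      · intro x hx
        refine ⟨hx.1, ?_⟩
        by_contra hxn
        have h3 := hβ3 A hA (Set.univ \ B) (hM_compl B hB)
        rw [hβ4 A hA B hB] at h3
        exact (h3 ⟨hx.1, trivial, hxn⟩).2 hx.2
    have hABM : A ∩ B ∈ M := hM_inter A hA B hB
    have hAcBM : (Set.univ \ A) ∩ B ∈ M := hM_inter _ hAcM B hB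
    have hAcCM : (Set.univ \ A) ∩ C ∈ M := hM_inter _ hAcM C hCM
    have hACM : A ∩ C ∈ M := hM_inter A hA C hCM
    have hfAc : f (Set.univ \ A) A = (∅ : Set W) := by
      rw [hβ4 A hA A hA, hβ1 A hA A hA Set.Subset.rfl hAe, Set.diff_self]
    have hsmall : ∀ X ∈ M, X ⊆ Set.univ \ A → f X A = ∅ := by
      intro X hX hXs
      exact Set.subset_eq_empty (by rw [← hfAc]; exact hmono X hX _ hAcM hXs) rfl
    -- f (A ∩ B) A = C  (both inclusions)
    have h1 : f (A ∩ B) A ⊆ C := hmono (A ∩ B) hABM B hB Set.inter_subset_right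
    have hsplit : ∀ X ∈ M, f X A ⊆ f (A ∩ X) A := by
      intro X hX
      have hXu : X = (A ∩ X) ∪ ((Set.univ \ A) ∩ X) := by
        ext x; simp only [Set.mem_union, Set.mem_inter_iff, Set.mem_diff, Set.mem_univ, true_and]
        tauto
      have h2 := hβ2 A hA (A ∩ X) (hM_inter A hA X hX) ((Set.univ \ A) ∩ X)
        (hM_inter _ hAcM X hX)
      rw [← hXu, hsmall _ (hM_inter _ hAcM X hX) Set.inter_subset_left,
        Set.union_empty] at h2
      exact h2
    have h2 : C ⊆ f (A ∩ B) A := hsplit B hB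
    have hfAB : f (A ∩ B) A = C := Set.Subset.antisymm h1 h2
    have hfCC : f C A = C := by
      apply Set.Subset.antisymm
      · have := hsplit C hCM
        rwa [hAC, hfAB] at this
      · calc C = f (A ∩ B) A := hfAB.symm
          _ ⊆ f C A := hmono (A ∩ B) hABM C hCM (by rw [← hAC]; exact Set.inter_subset_right)
    have hm := hP_mult A hA C hCM hfCC
    rw [← hAC, hm]
    ring
end
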